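/- Let (P_μ)_{μ∈𝒫(E)} be a nonlinear Markov transition kernel family on a measurable space (E,ℰ) satisfying the global nonlinear Dobrushin condition with constant α ∈ (0,1] and the measure-Lipschitz condition with constant λ, where 0 ≤ λ < α. Then for all μ, ν ∈ 𝒫(E) and all n ∈ ℤ₊, the n-th marginal laws satisfy d_TV(μ_n, ν_n) ≤ 2(1 − α + λ)^n, where μ_0 = μ, ν_0 = ν, μ_{k+1} = P_{μ_k} μ_k and ν_{k+1} = P_{ν_k} ν_k. -/

import Mathlib

/-!
Write `d = d_TV(μ, ν)`. For a measurable set `A`,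
`(P_μ μ)(A) - (P_ν ν)(A) = ∫ (P_μ(x, A) - P_ν(x, A)) dμ + ∫ P_ν(x, A) d(μ - ν)`.
The measure-Lipschitz condition bounds the first term by `λ d / 2`. For the second, the Hahn–Jordan
decomposition writes `μ - ν` as the difference of two measures of the same mass, at most `d / 2`,
so the integral of `g = P_ν(·, A)` is at most `osc g · d / 2`, and `osc g ≤ 1 - α` by the
Dobrushin condition. Hence each step contracts `d_TV` by the factor `1 - α + λ`, and `d_TV ≤ 2`
initially.
-/

open MeasureTheory ProbabilityTheory

/-- Total variation distance: `d_TV(μ,ν) = 2 ⨆_{A measurable} |μ(A) − ν(A)|`. -/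
noncomputable def dTV {E : Type*} [MeasurableSpace E] (μ ν : Measure E) : ℝ :=
  2 * ⨆ A : {A : Set E // MeasurableSet A}, |(μ A.1).toReal - (ν A.1).toReal|

open Set

section TotalVariation

variable {E : Type*} [MeasurableSpace E] {μ ν : Measure E}

lemma dTV_comm (μ ν : Measure E) : dTV μ ν = dTV ν μ := by
  simp only [dTV, abs_sub_comm]

lemma dTV_le_of_forall_abs_le {c : ℝ}
    (h : ∀ A, MeasurableSet A → |μ.real A - ν.real A| ≤ c) : dTV μ ν ≤ 2 * c := by
  have : Nonempty {A : Set E // MeasurableSet A} := ⟨⟨∅, .empty⟩⟩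
  exact mul_le_mul_of_nonneg_left (ciSup_le fun A => h A.1 A.2) zero_le_two

lemma abs_measureReal_sub_le_half_dTV [IsFiniteMeasure μ] [IsFiniteMeasure ν] {A : Set E}
    (hA : MeasurableSet A) : |μ.real A - ν.real A| ≤ dTV μ ν / 2 := by
  have hbdd : BddAbove (range fun B : {B : Set E // MeasurableSet B} =>
      |μ.real B.1 - ν.real B.1|) := by
    refine ⟨μ.real univ + ν.real univ, ?_⟩
    rintro _ ⟨B, rfl⟩
    have hμB : μ.real B.1 ≤ μ.real univ := measureReal_mono (subset_univ _)
    have hνB : ν.real B.1 ≤ ν.real univ := measureReal_mono (subset_univ _)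
    exact abs_sub_le_iff.2 ⟨by linarith [measureReal_nonneg (μ := ν) (s := B.1)],
      by linarith [measureReal_nonneg (μ := μ) (s := B.1)]⟩
  have := le_ciSup hbdd ⟨A, hA⟩
  simp only [dTV, ← measureReal_def] at this ⊢
  linarith

lemma dTV_le_two [IsProbabilityMeasure μ] [IsProbabilityMeasure ν] : dTV μ ν ≤ 2 := by
  refine (dTV_le_of_forall_abs_le (c := 1) fun A _ => ?_).trans_eq (mul_one 2)
  have hμA : μ.real A ≤ 1 := measureReal_le_one
  have hνA : ν.real A ≤ 1 := measureReal_le_one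
  exact abs_sub_le_iff.2 ⟨by linarith [measureReal_nonneg (μ := ν) (s := A)],
    by linarith [measureReal_nonneg (μ := μ) (s := A)]⟩

end TotalVariation

namespace MeasureTheory.Measure

variable {E : Type*} [MeasurableSpace E] (μ ν : Measure E) [IsFiniteMeasure μ] [IsFiniteMeasure ν]

lemma add_sub_eq_add_sub : μ + (ν - μ) = ν + (μ - ν) := by
  have h := sub_toSignedMeasure_eq_toSignedMeasure_sub (μ := μ) (ν := ν)
  rw [sub_eq_sub_iff_add_eq_add] at h
  rw [← toSignedMeasure_eq_toSignedMeasure_iff, toSignedMeasure_add, toSignedMeasure_add, h,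
    add_comm]

lemma measureReal_sub_of_le (h : ν ≤ μ) {s : Set E} (hs : MeasurableSet s) :
    (μ - ν).real s = μ.real s - ν.real s := by
  rw [measureReal_def, sub_apply hs h, ENNReal.toReal_sub_of_le (h s) (measure_ne_top _ _)]
  rfl

lemma exists_measureReal_sub_univ_eq :
    ∃ s, MeasurableSet s ∧ (μ - ν).real univ = μ.real s - ν.real s := by
  obtain ⟨s, hs⟩ := exists_isHahnDecomposition μ ν
  refine ⟨sᶜ, hs.measurableSet.compl, ?_⟩
  rw [← measureReal_add_measureReal_compl hs.measurableSet, measureReal_def,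
    sub_apply_eq_zero_of_isHahnDecomposition hs, ENNReal.toReal_zero, zero_add,
    ← measureReal_restrict_apply_univ,
    restrict_sub_eq_restrict_sub_restrict hs.measurableSet.compl,
    measureReal_sub_of_le _ _ hs.ge_on_compl .univ, measureReal_restrict_apply_univ,
    measureReal_restrict_apply_univ]

end MeasureTheory.Measure

section Oscillation

variable {E : Type*} [MeasurableSpace E]

lemma integral_sub_integral_eq_integral_sub_measure {G : Type*} [NormedAddCommGroup G]
    [NormedSpace ℝ G] {μ ν : Measure E} [IsFiniteMeasure μ] [IsFiniteMeasure ν] {g : E → G}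
    (hμ : Integrable g μ) (hν : Integrable g ν) :
    ∫ x, g x ∂μ - ∫ x, g x ∂ν = ∫ x, g x ∂(μ - ν) - ∫ x, g x ∂(ν - μ) := by
  have h := congrArg (fun ρ => ∫ x, g x ∂ρ) (Measure.add_sub_eq_add_sub μ ν)
  rw [integral_add_measure hμ (hν.mono_measure Measure.sub_le),
    integral_add_measure hν (hμ.mono_measure Measure.sub_le)] at h
  rw [sub_eq_sub_iff_add_eq_add, h, add_comm]

lemma integral_sub_integral_le_of_forall_sub_le {ρ₁ ρ₂ : Measure E} [IsFiniteMeasure ρ₁]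
    [IsFiniteMeasure ρ₂] (hmass : ρ₁ univ = ρ₂ univ) {g : E → ℝ} (h₁ : Integrable g ρ₁)
    (h₂ : Integrable g ρ₂) {c : ℝ} (hg : ∀ x y, g x - g y ≤ c) :
    ∫ x, g x ∂ρ₁ - ∫ x, g x ∂ρ₂ ≤ c * ρ₁.real univ := by
  rcases isEmpty_or_nonempty E with hE | hE
  · simp [Measure.eq_zero_of_isEmpty ρ₁, Measure.eq_zero_of_isEmpty ρ₂]
  obtain ⟨x₀⟩ := id hE
  have hbdd : BddBelow (range g) := ⟨g x₀ - c, by rintro _ ⟨y, rfl⟩; linarith [hg x₀ y]⟩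
  set a := ⨅ x, g x
  have hle : ∀ x, g x ≤ a + c := fun x => by
    have : g x - c ≤ a := le_ciInf fun y => by linarith [hg x y]
    linarith
  have hup : ∫ x, g x ∂ρ₁ ≤ (a + c) * ρ₁.real univ := by
    simpa [mul_comm] using integral_mono h₁ (integrable_const (a + c)) hle
  have hlow : a * ρ₂.real univ ≤ ∫ x, g x ∂ρ₂ := by
    simpa [mul_comm] using integral_mono (integrable_const a) h₂ (ciInf_le hbdd)
  have hreal : ρ₂.real univ = ρ₁.real univ := by simp only [measureReal_def, hmass]
  rw [hreal] at hlow
  linarith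

lemma integral_sub_integral_le_mul_half_dTV {μ ν : Measure E} [IsProbabilityMeasure μ]
    [IsProbabilityMeasure ν] {g : E → ℝ} (hμ : Integrable g μ) (hν : Integrable g ν) {c : ℝ}
    (hg : ∀ x y, g x - g y ≤ c) :
    ∫ x, g x ∂μ - ∫ x, g x ∂ν ≤ c * (dTV μ ν / 2) := by
  obtain ⟨x₀⟩ := nonempty_of_isProbabilityMeasure μ
  have hc : 0 ≤ c := by simpa using hg x₀ x₀
  have hmass : (μ - ν) univ = (ν - μ) univ := by
    have h := congrArg (· univ) (Measure.add_sub_eq_add_sub μ ν)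
    simp only [Measure.add_apply, measure_univ] at h
    exact ((ENNReal.add_right_inj ENNReal.one_ne_top).1 h).symm
  obtain ⟨s, hs, hsub⟩ := Measure.exists_measureReal_sub_univ_eq μ ν
  calc ∫ x, g x ∂μ - ∫ x, g x ∂ν = ∫ x, g x ∂(μ - ν) - ∫ x, g x ∂(ν - μ) :=
        integral_sub_integral_eq_integral_sub_measure hμ hν
    _ ≤ c * (μ - ν).real univ :=
        integral_sub_integral_le_of_forall_sub_le hmass (hμ.mono_measure Measure.sub_le)
          (hν.mono_measure Measure.sub_le) hg
    _ ≤ c * (dTV μ ν / 2) := by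
        rw [hsub]
        exact mul_le_mul_of_nonneg_left
          ((le_abs_self _).trans (abs_measureReal_sub_le_half_dTV hs)) hc

end Oscillation

section Kernel

variable {E F : Type*} [MeasurableSpace E] [MeasurableSpace F]

lemma measureReal_bind_eq_integral (μ : Measure E) (κ : Kernel E F) [IsFiniteKernel κ]
    {A : Set F} (hA : MeasurableSet A) : (κ ∘ₘ μ).real A = ∫ x, (κ x).real A ∂μ := by
  simp only [measureReal_def]
  rw [Measure.bind_apply hA κ.aemeasurable, integral_toReal (κ.measurable_coe hA).aemeasurable
    (ae_of_all _ fun x => measure_lt_top _ _)]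

lemma integrable_measureReal_apply {μ : Measure E} [IsFiniteMeasure μ] (κ : Kernel E F)
    [IsMarkovKernel κ] {A : Set F} (hA : MeasurableSet A) :
    Integrable (fun x => (κ x).real A) μ :=
  .of_bound (κ.measurable_coe hA).ennreal_toReal.aestronglyMeasurable 1
    (ae_of_all _ fun _ => by rw [Real.norm_of_nonneg measureReal_nonneg]; exact measureReal_le_one)

lemma dTV_bind_le {μ ν : Measure E} [IsProbabilityMeasure μ] [IsProbabilityMeasure ν]
    {κ η : Kernel E F} [IsMarkovKernel κ] [IsMarkovKernel η] {a b : ℝ}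
    (hκη : ∀ x, dTV (κ x) (η x) ≤ a) (hη : ∀ x y, dTV (η x) (η y) ≤ b) :
    dTV (κ ∘ₘ μ) (η ∘ₘ ν) ≤ a + b / 2 * dTV μ ν := by
  refine (dTV_le_of_forall_abs_le (c := a / 2 + b / 2 * (dTV μ ν / 2)) fun A hA => ?_).trans_eq
    (by ring)
  set f := fun x => (κ x).real A
  set g := fun x => (η x).real A
  have hf := integrable_measureReal_apply (μ := μ) κ hA
  have hgμ := integrable_measureReal_apply (μ := μ) η hA
  have hgν := integrable_measureReal_apply (μ := ν) η hA
  have hfg : ∀ x, ‖f x - g x‖ ≤ a / 2 := fun x =>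
    (abs_measureReal_sub_le_half_dTV hA).trans (by linarith [hκη x])
  have hg : ∀ x y, g x - g y ≤ b / 2 := fun x y =>
    (le_abs_self _).trans ((abs_measureReal_sub_le_half_dTV hA).trans (by linarith [hη x y]))
  have hkernel : |∫ x, f x ∂μ - ∫ x, g x ∂μ| ≤ a / 2 := by
    rw [← integral_sub hf hgμ]
    simpa using norm_integral_le_of_norm_le_const (μ := μ) (ae_of_all _ hfg)
  have hmeasure : |∫ x, g x ∂μ - ∫ x, g x ∂ν| ≤ b / 2 * (dTV μ ν / 2) :=
    abs_sub_le_iff.2 ⟨integral_sub_integral_le_mul_half_dTV hgμ hgν hg,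
      dTV_comm μ ν ▸ integral_sub_integral_le_mul_half_dTV hgν hgμ hg⟩
  rw [measureReal_bind_eq_integral μ κ hA, measureReal_bind_eq_integral ν η hA]
  calc |∫ x, f x ∂μ - ∫ x, g x ∂ν|
      = |(∫ x, f x ∂μ - ∫ x, g x ∂μ) + (∫ x, g x ∂μ - ∫ x, g x ∂ν)| := by ring_nf
    _ ≤ a / 2 + b / 2 * (dTV μ ν / 2) := (abs_add_le _ _).trans (add_le_add hkernel hmeasure)

end Kernel

theorem stmt6_general {E : Type*} [MeasurableSpace E]
    (P : Measure E → Kernel E E) (hMarkov : ∀ μ, IsMarkovKernel (P μ))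
    (α lam : ℝ) (hα1 : α ≤ 1) (hlam0 : 0 ≤ lam)
    (hDobr : ∀ μ ν : Measure E, IsProbabilityMeasure μ → IsProbabilityMeasure ν →
      ∀ x y : E, dTV ((P μ) x) ((P ν) y) ≤ 2 * (1 - α))
    (hLip : ∀ μ ν : Measure E, IsProbabilityMeasure μ → IsProbabilityMeasure ν →
      ∀ x : E, dTV ((P μ) x) ((P ν) x) ≤ lam * dTV μ ν)
    (μ ν : Measure E) (hμ : IsProbabilityMeasure μ) (hν : IsProbabilityMeasure ν)
    (μseq νseq : ℕ → Measure E) (hμ0 : μseq 0 = μ) (hν0 : νseq 0 = ν)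
    (hμS : ∀ k : ℕ, μseq (k + 1) = (μseq k).bind ⇑(P (μseq k)))
    (hνS : ∀ k : ℕ, νseq (k + 1) = (νseq k).bind ⇑(P (νseq k))) :
    ∀ n : ℕ, dTV (μseq n) (νseq n) ≤ 2 * (1 - α + lam) ^ n := by
  have hprob : ∀ n, IsProbabilityMeasure (μseq n) ∧ IsProbabilityMeasure (νseq n) := by
    intro n
    induction n with
    | zero => exact hμ0 ▸ hν0 ▸ ⟨hμ, hν⟩
    | succ k ih =>
      obtain ⟨_, _⟩ := ih
      have := hMarkov (μseq k); have := hMarkov (νseq k)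
      rw [hμS, hνS]
      exact ⟨inferInstance, inferInstance⟩
  have hr : 0 ≤ 1 - α + lam := by linarith
  intro n
  induction n with
  | zero => simpa [hμ0, hν0] using dTV_le_two
  | succ n ih =>
    obtain ⟨hμn, hνn⟩ := hprob n
    have := hMarkov (μseq n); have := hMarkov (νseq n)
    rw [hμS, hνS]
    calc dTV (P (μseq n) ∘ₘ μseq n) (P (νseq n) ∘ₘ νseq n)
        ≤ lam * dTV (μseq n) (νseq n) + 2 * (1 - α) / 2 * dTV (μseq n) (νseq n) :=
          dTV_bind_le (hLip _ _ hμn hνn) (hDobr _ _ hνn hνn)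
      _ = (1 - α + lam) * dTV (μseq n) (νseq n) := by ring
      _ ≤ (1 - α + lam) * (2 * (1 - α + lam) ^ n) := by gcongr
      _ = 2 * (1 - α + lam) ^ (n + 1) := by ring

/-- Under the global nonlinear Dobrushin condition with constant `α ∈ (0,1]` and the
measure-Lipschitz condition with constant `lam`, `0 ≤ lam < α`, the marginal laws started
from any two initial distributions satisfy `d_TV(μ_n, ν_n) ≤ 2 (1 − α + lam)^n`. -/
theorem stmt6 {E : Type*} [MeasurableSpace E]
    (P : Measure E → Kernel E E) (hMarkov : ∀ μ, IsMarkovKernel (P μ))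
    (α lam : ℝ) (hα0 : 0 < α) (hα1 : α ≤ 1) (hlam0 : 0 ≤ lam) (hlamα : lam < α)
    (hDobr : ∀ μ ν : Measure E, IsProbabilityMeasure μ → IsProbabilityMeasure ν →
      ∀ x y : E, dTV ((P μ) x) ((P ν) y) ≤ 2 * (1 - α))
    (hLip : ∀ μ ν : Measure E, IsProbabilityMeasure μ → IsProbabilityMeasure ν →
      ∀ x : E, dTV ((P μ) x) ((P ν) x) ≤ lam * dTV μ ν)
    (μ ν : Measure E) (hμ : IsProbabilityMeasure μ) (hν : IsProbabilityMeasure ν)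
    (μseq νseq : ℕ → Measure E) (hμ0 : μseq 0 = μ) (hν0 : νseq 0 = ν)
    (hμS : ∀ k : ℕ, μseq (k + 1) = (μseq k).bind ⇑(P (μseq k)))
    (hνS : ∀ k : ℕ, νseq (k + 1) = (νseq k).bind ⇑(P (νseq k))) :
    ∀ n : ℕ, dTV (μseq n) (νseq n) ≤ 2 * (1 - α + lam) ^ n :=
  stmt6_general P hMarkov α lam hα1 hlam0 hDobr hLip μ ν hμ hν μseq νseq hμ0 hν0 hμS hνS
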